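/- Let N ≥ 3, let η ≥ 0 and ζ ∈ ℝ, let Λ > 0, and let F be the BCD-type prepotential with parameters (η, ζ) on the cone C = {x ∈ ℝ^N : x_1 > ⋯ > x_N > 0}. Then at every point of C its Hessian entries T_ij = ∂²F/∂x_i∂x_j satisfy coth(T_ik/2) = coth(T_ij/2) · coth(T_jk/2) for all 1 ≤ i < j < k ≤ N (all the T_ij with i < j are nonzero on C, so the expressions are well defined; indeed coth(T_ij/2) = x_i/x_j). -/

import Mathlib

open Real Finset

/-- Partial derivative in the `i`-th coordinate direction. -/
noncomputable def pd {N : ℕ} (i : Fin N) (f : (Fin N → ℝ) → ℝ) : (Fin N → ℝ) → ℝ :=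
  fun x => fderiv ℝ f x (Pi.single i 1)

/-- Hessian entry `T_ij = ∂²f/∂x_i∂x_j`. -/
noncomputable def hess {N : ℕ} (f : (Fin N → ℝ) → ℝ) (i j : Fin N) : (Fin N → ℝ) → ℝ :=
  pd i (pd j f)

/-- The open cone `x₁ > x₂ > ⋯ > x_N > 0`. -/
def cone (N : ℕ) : Set (Fin N → ℝ) := {x | StrictAnti x ∧ ∀ i, 0 < x i}

/-- The BCD-type prepotential with parameters `η, ζ` and cut-off `Λ`. -/
noncomputable def FBCD (N : ℕ) (η ζ Λ : ℝ) (x : Fin N → ℝ) : ℝ :=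
  (1/2) * ∑ i : Fin N, ∑ j : Fin N,
      (if i < j then (x i - x j)^2 * Real.log ((x i - x j)/Λ)
                      + (x i + x j)^2 * Real.log ((x i + x j)/Λ) else 0)
  + η * ∑ i : Fin N, (x i)^2 * Real.log (x i / Λ)
  + ζ * ∑ i : Fin N, (x i)^2

/-- The hyperbolic cotangent. -/
noncomputable def coth (t : ℝ) : ℝ := Real.cosh t / Real.sinh t

lemma hasDerivAt_logdiv {Λ t : ℝ} (hΛ : Λ ≠ 0) (ht : t ≠ 0) :
    HasDerivAt (fun s => Real.log (s/Λ)) t⁻¹ t := by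
  have h1 : HasDerivAt (fun s : ℝ => s/Λ) (1/Λ) t := (hasDerivAt_id t).div_const Λ
  have h2 := (Real.hasDerivAt_log (div_ne_zero ht hΛ)).comp t h1
  refine h2.congr_deriv ?_
  field_simp

lemma hasDerivAt_hA {Λ t : ℝ} (hΛ : Λ ≠ 0) (ht : t ≠ 0) :
    HasDerivAt (fun s => s^2 * Real.log (s/Λ)) (2*t*Real.log (t/Λ) + t) t := by
  have := (hasDerivAt_pow 2 t).mul (hasDerivAt_logdiv hΛ ht)
  refine this.congr_deriv ?_
  field_simp
  ring

lemma hasDerivAt_hA' {Λ t : ℝ} (hΛ : Λ ≠ 0) (ht : t ≠ 0) :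
    HasDerivAt (fun s => 2*s*Real.log (s/Λ) + s) (2*Real.log (t/Λ) + 3) t := by
  have h1 : HasDerivAt (fun s : ℝ => 2*s) 2 t := by
    simpa using (hasDerivAt_id t).const_mul (2:ℝ)
  have := (h1.mul (hasDerivAt_logdiv hΛ ht)).add (hasDerivAt_id t)
  refine this.congr_deriv ?_
  field_simp
  ring

noncomputable def GB (N : ℕ) (η ζ Λ : ℝ) (j : Fin N) (y : Fin N → ℝ) : ℝ :=
  (1/2) * ∑ a : Fin N, ∑ b : Fin N,
      (if a < b then
        (2*(y a - y b)*Real.log ((y a - y b)/Λ) + (y a - y b)) *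
          ((if a = j then (1:ℝ) else 0) - (if b = j then (1:ℝ) else 0))
        + (2*(y a + y b)*Real.log ((y a + y b)/Λ) + (y a + y b)) *
          ((if a = j then (1:ℝ) else 0) + (if b = j then (1:ℝ) else 0))
      else 0)
  + (η * (2*(y j)*Real.log (y j/Λ) + y j) + ζ * (2 * y j))

lemma pd_FBCD {N : ℕ} {η ζ Λ : ℝ} (hΛ : 0 < Λ) (j : Fin N) {y : Fin N → ℝ}
    (hy : y ∈ cone N) : pd j (FBCD N η ζ Λ) y = GB N η ζ Λ j y := by
  have hΛ' : Λ ≠ 0 := ne_of_gt hΛ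
  have hproj : ∀ a : Fin N, HasFDerivAt (fun y : Fin N → ℝ => y a)
      (ContinuousLinearMap.proj (R := ℝ) (φ := fun _ : Fin N => ℝ) a) y :=
    fun a => (ContinuousLinearMap.proj (R := ℝ) (φ := fun _ : Fin N => ℝ) a).hasFDerivAt
  set P : Fin N → (Fin N → ℝ) →L[ℝ] ℝ :=
    fun a => ContinuousLinearMap.proj (R := ℝ) (φ := fun _ : Fin N => ℝ) a with hP
  have hsub : ∀ a b : Fin N, a < b → (0:ℝ) < y a - y b := fun a b hab =>
    sub_pos.2 (hy.1 hab)
  have haddpos : ∀ a b : Fin N, (0:ℝ) < y a + y b := fun a b =>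
    add_pos (hy.2 a) (hy.2 b)
  set D : Fin N → Fin N → (Fin N → ℝ) →L[ℝ] ℝ := fun a b =>
    (2*(y a - y b)*Real.log ((y a - y b)/Λ) + (y a - y b)) • (P a - P b)
    + (2*(y a + y b)*Real.log ((y a + y b)/Λ) + (y a + y b)) • (P a + P b) with hD
  have key : HasFDerivAt (FBCD N η ζ Λ)
      ((1/2 : ℝ) • (∑ a : Fin N, ∑ b : Fin N, if a < b then D a b else 0)
        + η • (∑ a : Fin N, (2*(y a)*Real.log (y a/Λ) + y a) • P a)
        + ζ • (∑ a : Fin N, (2 * y a) • P a)) y := by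
    apply HasFDerivAt.add
    apply HasFDerivAt.add
    · apply HasFDerivAt.const_mul
      apply HasFDerivAt.fun_sum
      intro a _
      apply HasFDerivAt.fun_sum
      intro b _
      by_cases hab : a < b
      · simp only [hab, if_true, hD]
        exact ((hasDerivAt_hA hΛ' (ne_of_gt (hsub a b hab))).comp_hasFDerivAt y
            ((hproj a).sub (hproj b))).add
          ((hasDerivAt_hA hΛ' (ne_of_gt (haddpos a b))).comp_hasFDerivAt y
            ((hproj a).add (hproj b)))
      · simpa [hab] using hasFDerivAt_const (0:ℝ) y
    · apply HasFDerivAt.const_mul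
      apply HasFDerivAt.fun_sum
      intro a _
      exact (hasDerivAt_hA hΛ' (ne_of_gt (hy.2 a))).comp_hasFDerivAt y (hproj a)
    · apply HasFDerivAt.const_mul
      apply HasFDerivAt.fun_sum
      intro a _
      have := (hasDerivAt_pow 2 (y a)).comp_hasFDerivAt y (hproj a)
      refine this.congr_fderiv ?_
      simp [hP]
  rw [pd, key.fderiv]
  simp only [ContinuousLinearMap.add_apply, ContinuousLinearMap.smul_apply,
    ContinuousLinearMap.coe_sum', Finset.sum_apply,
    apply_ite (fun (L : (Fin N → ℝ) →L[ℝ] ℝ) => L (Pi.single j 1)),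
    ContinuousLinearMap.zero_apply, hD, ContinuousLinearMap.sub_apply,
    ContinuousLinearMap.proj_apply, hP, Pi.single_apply, smul_eq_mul]
  have e2 : ∑ x : Fin N, (2 * y x * Real.log (y x / Λ) + y x) * (if x = j then (1:ℝ) else 0)
      = 2 * y j * Real.log (y j / Λ) + y j := by
    simp [mul_ite, Finset.sum_ite_eq']
  have e3 : ∑ x : Fin N, 2 * y x * (if x = j then (1:ℝ) else 0) = 2 * y j := by
    simp [mul_ite, Finset.sum_ite_eq']
  rw [GB, e2, e3]
  ring

lemma isOpen_cone (N : ℕ) : IsOpen (cone N) := by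
  have : cone N =
      (⋂ (a : Fin N), ⋂ (b : Fin N), ⋂ (_ : a < b), {x : Fin N → ℝ | x b < x a}) ∩
        ⋂ i, {x : Fin N → ℝ | 0 < x i} := by
    ext x
    simp [cone, StrictAnti, Set.mem_iInter]
  rw [this]
  exact (isOpen_iInter_of_finite fun a => isOpen_iInter_of_finite fun b =>
      isOpen_iInter_of_finite fun _ => isOpen_lt (continuous_apply b) (continuous_apply a)).inter
    (isOpen_iInter_of_finite fun i => isOpen_lt continuous_const (continuous_apply i))

lemma hess_FBCD {N : ℕ} {η ζ Λ : ℝ} (hΛ : 0 < Λ) {i j : Fin N} (hij : i < j)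
    {x : Fin N → ℝ} (hx : x ∈ cone N) :
    hess (FBCD N η ζ Λ) i j x = Real.log ((x i + x j)/(x i - x j)) := by
  have hΛ' : Λ ≠ 0 := ne_of_gt hΛ
  have hev : pd j (FBCD N η ζ Λ) =ᶠ[nhds x] GB N η ζ Λ j :=
    Filter.eventuallyEq_of_mem ((isOpen_cone N).mem_nhds hx) (fun y hy => pd_FBCD hΛ j hy)
  have hfd : fderiv ℝ (pd j (FBCD N η ζ Λ)) x = fderiv ℝ (GB N η ζ Λ j) x := hev.fderiv_eq
  have hproj : ∀ a : Fin N, HasFDerivAt (fun y : Fin N → ℝ => y a)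
      (ContinuousLinearMap.proj (R := ℝ) (φ := fun _ : Fin N => ℝ) a) x :=
    fun a => (ContinuousLinearMap.proj (R := ℝ) (φ := fun _ : Fin N => ℝ) a).hasFDerivAt
  set P : Fin N → (Fin N → ℝ) →L[ℝ] ℝ :=
    fun a => ContinuousLinearMap.proj (R := ℝ) (φ := fun _ : Fin N => ℝ) a with hP
  have hsubpos : ∀ a b : Fin N, a < b → (0:ℝ) < x a - x b := fun a b hab =>
    sub_pos.2 (hx.1 hab)
  have haddpos : ∀ a b : Fin N, (0:ℝ) < x a + x b := fun a b =>
    add_pos (hx.2 a) (hx.2 b)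
  set DG : Fin N → Fin N → (Fin N → ℝ) →L[ℝ] ℝ := fun a b =>
    ((if a = j then (1:ℝ) else 0) - (if b = j then (1:ℝ) else 0)) •
      ((2*Real.log ((x a - x b)/Λ) + 3) • (P a - P b))
    + ((if a = j then (1:ℝ) else 0) + (if b = j then (1:ℝ) else 0)) •
      ((2*Real.log ((x a + x b)/Λ) + 3) • (P a + P b)) with hDG
  have keyG : HasFDerivAt (GB N η ζ Λ j)
      ((1/2 : ℝ) • (∑ a : Fin N, ∑ b : Fin N, if a < b then DG a b else 0)
        + (η • ((2*Real.log (x j/Λ) + 3) • P j) + ζ • ((2:ℝ) • P j))) x := by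
    apply HasFDerivAt.add
    · apply HasFDerivAt.const_mul
      apply HasFDerivAt.fun_sum
      intro a _
      apply HasFDerivAt.fun_sum
      intro b _
      by_cases hab : a < b
      · simp only [hab, if_true, hDG]
        exact (((hasDerivAt_hA' hΛ' (ne_of_gt (hsubpos a b hab))).comp_hasFDerivAt x
            ((hproj a).sub (hproj b))).mul_const _).add
          (((hasDerivAt_hA' hΛ' (ne_of_gt (haddpos a b))).comp_hasFDerivAt x
            ((hproj a).add (hproj b))).mul_const _)
      · simpa [hab] using hasFDerivAt_const (0:ℝ) x
    · apply HasFDerivAt.add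
      · exact HasFDerivAt.const_mul
          ((hasDerivAt_hA' hΛ' (ne_of_gt (hx.2 j))).comp_hasFDerivAt x (hproj j)) η
      · exact HasFDerivAt.const_mul ((hproj j).const_mul 2) ζ
  rw [hess, pd, hfd, keyG.fderiv]
  simp only [ContinuousLinearMap.add_apply, ContinuousLinearMap.smul_apply,
    ContinuousLinearMap.coe_sum', Finset.sum_apply,
    apply_ite (fun (L : (Fin N → ℝ) →L[ℝ] ℝ) => L (Pi.single i 1)),
    ContinuousLinearMap.zero_apply, hDG, ContinuousLinearMap.sub_apply,
    ContinuousLinearMap.proj_apply, hP, Pi.single_apply, smul_eq_mul, hij.ne']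
  have hterm : ∀ a b : Fin N,
      (if a < b then
        ((if a = j then (1:ℝ) else 0) - if b = j then 1 else 0) *
            ((2 * Real.log ((x a - x b) / Λ) + 3) *
              ((if a = i then (1:ℝ) else 0) - if b = i then 1 else 0)) +
          ((if a = j then (1:ℝ) else 0) + if b = j then 1 else 0) *
            ((2 * Real.log ((x a + x b) / Λ) + 3) *
              ((if a = i then (1:ℝ) else 0) + if b = i then 1 else 0))
        else 0)
      = if b = j then (if a = i then
          2*Real.log ((x i + x j)/Λ) - 2*Real.log ((x i - x j)/Λ) else 0) else 0 := by
    intro a b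
    rcases eq_or_ne b j with hbj | hbj <;> rcases eq_or_ne a i with hai | hai
    · subst hbj; subst hai
      simp only [if_pos rfl, if_neg hij.ne, if_neg hij.ne', if_pos hij, eq_self_iff_true,
        if_true, if_false]
      ring
    · subst hbj
      by_cases hab : a < b
      · have haj : a ≠ b := ne_of_lt hab
        simp [hab, haj, hai, hij.ne']
      · rw [if_neg hab, if_pos rfl, if_neg hai]
    · have haj : a ≠ j := by rw [hai]; exact hij.ne
      by_cases hab : a < b
      · simp [hab, haj, hbj]
      · rw [if_neg hab, if_neg hbj]
    · by_cases hab : a < b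
      · by_cases haj : a = j
        · have hbi : b ≠ i := (hij.trans (haj ▸ hab)).ne'
          simp [hab, haj, hai, hbi, hbj, hij.ne']
        · simp [hab, haj, hai, hbj]
      · rw [if_neg hab, if_neg hbj]
  simp only [hterm, Finset.sum_ite_eq', Finset.mem_univ, if_true, if_false, mul_zero,
    add_zero, zero_add]
  have h1 : x i + x j ≠ 0 := ne_of_gt (haddpos i j)
  have h2 : x i - x j ≠ 0 := ne_of_gt (hsubpos i j hij)
  rw [Real.log_div h1 h2, Real.log_div h1 hΛ', Real.log_div h2 hΛ']
  ring


lemma coth_val {a b : ℝ} (hb : 0 < b) (hba : b < a) :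
    coth (Real.log ((a + b)/(a - b)) / 2) = a / b := by
  have hab : (0:ℝ) < a - b := sub_pos.2 hba
  have hr : (1:ℝ) < (a + b)/(a - b) := by
    rw [lt_div_iff₀ hab]; linarith
  set r := (a + b)/(a - b) with hrdef
  have hr0 : (0:ℝ) < r := lt_trans one_pos hr
  set s := Real.exp (Real.log r / 2) with hs
  have hs0 : (0:ℝ) < s := Real.exp_pos _
  have hs2 : s * s = r := by
    rw [hs, ← Real.exp_add, show Real.log r / 2 + Real.log r / 2 = Real.log r by ring,
      Real.exp_log hr0]
  have hcosh : Real.cosh (Real.log r / 2) = (s + s⁻¹)/2 := by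
    rw [Real.cosh_eq, Real.exp_neg]
  have hsinh : Real.sinh (Real.log r / 2) = (s - s⁻¹)/2 := by
    rw [Real.sinh_eq, Real.exp_neg]
  have hsm1 : s * s - 1 ≠ 0 := by rw [hs2]; linarith
  have hden : s - s⁻¹ ≠ 0 := by
    have : s - s⁻¹ = (s * s - 1)/s := by field_simp
    rw [this]
    exact div_ne_zero hsm1 hs0.ne'
  have hrm1 : r - 1 = 2*b/(a-b) := by rw [hrdef]; field_simp; ring
  have hrp1 : r + 1 = 2*a/(a-b) := by rw [hrdef]; field_simp; ring
  rw [coth, hcosh, hsinh]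
  calc ((s + s⁻¹)/2)/((s - s⁻¹)/2) = (s*s + 1)/(s*s - 1) := by
        rw [div_div_div_comm, div_self (by norm_num : (2:ℝ) ≠ 0), div_one,
          div_eq_div_iff hden hsm1]
        field_simp
    _ = (r + 1)/(r - 1) := by rw [hs2]
    _ = (2*a/(a-b))/(2*b/(a-b)) := by rw [hrp1, hrm1]
    _ = a / b := by
        rw [div_div_div_comm, div_self hab.ne', div_one, mul_div_mul_left _ _
          (by norm_num : (2:ℝ) ≠ 0)]

/-- for the BCD-type prepotential, on the cone, the Hessian entries
satisfy `coth(T_ik/2) = coth(T_ij/2)·coth(T_jk/2)` for all `i < j < k`; moreover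
all off-diagonal `T_ij` are nonzero, indeed `coth(T_ij/2) = x_i/x_j`. -/
theorem bcd_coth_cocycle (N : ℕ) (hN : 3 ≤ N) (η ζ Λ : ℝ)
    (hη : 0 ≤ η) (hΛ : 0 < Λ) (x : Fin N → ℝ) (hx : x ∈ cone N) :
    (∀ i j : Fin N, i < j → hess (FBCD N η ζ Λ) i j x ≠ 0 ∧
        coth (hess (FBCD N η ζ Λ) i j x / 2) = x i / x j) ∧
    (∀ i j k : Fin N, i < j → j < k →
        coth (hess (FBCD N η ζ Λ) i k x / 2) =
          coth (hess (FBCD N η ζ Λ) i j x / 2)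
            * coth (hess (FBCD N η ζ Λ) j k x / 2)) := by
  have main : ∀ i j : Fin N, i < j → hess (FBCD N η ζ Λ) i j x ≠ 0 ∧
      coth (hess (FBCD N η ζ Λ) i j x / 2) = x i / x j := by
    intro i j hij
    have hb : 0 < x j := hx.2 j
    have hba : x j < x i := hx.1 hij
    have hT := hess_FBCD (η := η) (ζ := ζ) hΛ hij hx
    have hr : (1:ℝ) < (x i + x j)/(x i - x j) := by
      rw [lt_div_iff₀ (sub_pos.2 hba)]; linarith
    refine ⟨?_, ?_⟩
    · rw [hT]
      exact ne_of_gt (Real.log_pos hr)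
    · rw [hT]
      exact coth_val hb hba
  refine ⟨main, fun i j k hij hjk => ?_⟩
  rw [(main i k (hij.trans hjk)).2, (main i j hij).2, (main j k hjk).2]
  rw [div_mul_div_cancel₀]
  exact (hx.2 j).ne'
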